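/- Let μ ∈ ℤʳ and let α̂ ∈ Φ̃₊^{(n)} be a positive affine root with ⟨α̂, μ⟩ < 0. Then s_{α̂}μ is strictly less than μ in the partial order ≤ₙ. Conversely, if s_{α̂}μ <ₙ μ, then ⟨α̂, μ⟩ < 0. -/

import Mathlib

/-- The permutation of ℤʳ induced by swapping coordinates a and b. -/
def swapPerm (r : ℕ) (a b : Fin (r + 2)) : Equiv.Perm (Fin (r + 2) → ℤ) :=
  Equiv.piCongrLeft' (fun _ => ℤ) (Equiv.swap a b)

/-- The affine generator s₀⁽ⁿ⁾. -/
def affPerm (r : ℕ) (n : ℤ) : Equiv.Perm (Fin (r + 2) → ℤ) :=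
  Function.Involutive.toPerm
    (fun f j => if j = 0 then f (Fin.last (r + 1)) + n
      else if j = Fin.last (r + 1) then f 0 - n else f j)
    (by
      intro f; funext j
      have hne : (Fin.last (r + 1) : Fin (r + 2)) ≠ 0 := by simp [Fin.ext_iff]
      by_cases h0 : j = 0
      · subst h0; simp [hne]
      · by_cases h1 : j = Fin.last (r + 1)
        · subst h1; simp [hne, h0]
        · simp [h0, h1])

/-- The simple generators of W⁽ⁿ⁾_Cox = nQ ⋊ S_r acting affinely on ℤʳ. -/
def gen (r : ℕ) (n : ℤ) (i : Fin (r + 2)) : Equiv.Perm (Fin (r + 2) → ℤ) :=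
  if i = 0 then affPerm r n else swapPerm r (i - 1) i

/-- A⁽ⁿ⁾ = {λ ∈ ℤʳ : λ₁ ≥ ⋯ ≥ λ_r, λ₁ − λ_r ≤ n}. -/
def inA (r : ℕ) (n : ℤ) (lam : Fin (r + 2) → ℤ) : Prop :=
  (∀ i j : Fin (r + 2), i ≤ j → lam j ≤ lam i) ∧ lam 0 - lam (Fin.last (r + 1)) ≤ n

/-- `l` is a reduced word for the group element `w` of W⁽ⁿ⁾_Cox. -/
def isReducedWordOf (r : ℕ) (n : ℤ) (l : List (Fin (r + 2)))
    (w : Equiv.Perm (Fin (r + 2) → ℤ)) : Prop :=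
  (l.map (gen r n)).prod = w ∧
    ∀ l' : List (Fin (r + 2)), (l'.map (gen r n)).prod = w → l.length ≤ l'.length

/-- The Bruhat order on W⁽ⁿ⁾_Cox, via the subword characterization: w' ≤ w iff w' is
represented by a subword of a reduced expression of w. -/
def bruhatLE (r : ℕ) (n : ℤ) (w' w : Equiv.Perm (Fin (r + 2) → ℤ)) : Prop :=
  ∃ l : List (Fin (r + 2)), isReducedWordOf r n l w ∧
    ∃ l' : List (Fin (r + 2)), l'.Sublist l ∧ (l'.map (gen r n)).prod = w'

/-- `l` is a word of minimal length among words of W⁽ⁿ⁾_Cox taking λ to μ; its product is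
then (a reduced expression of) the shortest element w with wλ = μ. -/
def isMinWordTo (r : ℕ) (n : ℤ) (lam μ : Fin (r + 2) → ℤ) (l : List (Fin (r + 2))) : Prop :=
  ((l.map (gen r n)).prod) lam = μ ∧
    ∀ l' : List (Fin (r + 2)), ((l'.map (gen r n)).prod) lam = μ → l.length ≤ l'.length

/-- The partial order ≤ₙ on ℤʳ: ν ≤ₙ μ iff λ_ν = λ_μ (the common element of A⁽ⁿ⁾) and
w_ν ≤ w_μ in the Bruhat order, where w_ν, w_μ are the shortest elements with
w_ν λ = ν, w_μ λ = μ. -/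
def leN (r : ℕ) (n : ℤ) (ν μ : Fin (r + 2) → ℤ) : Prop :=
  ∃ (lam : Fin (r + 2) → ℤ) (lν lμ : List (Fin (r + 2))),
    inA r n lam ∧ isMinWordTo r n lam ν lν ∧ isMinWordTo r n lam μ lμ ∧
      bruhatLE r n ((lν.map (gen r n)).prod) ((lμ.map (gen r n)).prod)

/-- The affine reflection s_{α̂} for α̂ = n(ε_a − ε_b) + sn²δ: s_{α̂} v = s_α v − snα. -/
def reflAff (r : ℕ) (n : ℤ) (a b : Fin (r + 2)) (s : ℤ) (v : Fin (r + 2) → ℤ) :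
    Fin (r + 2) → ℤ :=
  fun j => (v ∘ Equiv.swap a b) j - s * n * (if j = a then 1 else if j = b then -1 else 0)

/-!
Write `μ = w λ` with `λ ∈ A⁽ⁿ⁾` and `w` given by a word of minimal length. Positive affine roots
pair non-negatively with `λ`, so if `⟨α̂, μ⟩ < 0` the root `w⁻¹ α̂` is negative; walking `α̂`
back along the word, it turns negative at some letter, where it must be that letter's simple
root. Deleting that letter is a word for `s_α̂ w` (strong exchange), and a minimal subword of it
exhibits `s_α̂ μ <ₙ μ`. Conversely, if `⟨α̂, μ⟩ > 0` then `⟨α̂, s_α̂ μ⟩ < 0`, and exchange applied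
to a minimal word of `s_α̂ μ` gives a word for `μ` shorter than the subword bound of the Bruhat
order allows.
-/

theorem comp_swap_eq_sub_smul {ι R : Type*} [DecidableEq ι] [Ring R] (a b : ι) (v : ι → R) :
    v ∘ Equiv.swap a b = v - (v a - v b) • (Pi.single a 1 - Pi.single b 1) := by
  funext j
  by_cases hja : j = a
  · subst hja; by_cases hjb : j = b <;> simp [*]
  · by_cases hjb : j = b
    · subst hjb; simp [hja]
    · simp [Equiv.swap_apply_of_ne_of_ne hja hjb, hja, hjb]

/-- `⟨a, b, s, _⟩` stands for the affine root `n(ε_a − ε_b) + s n² δ`; its `pairing` with `v` is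
`⟨α̂, v⟩ / n`, and `coroot` is `ε_a − ε_b`. -/
structure AffRoot (ι : Type*) where
  a : ι
  b : ι
  s : ℤ
  ne : a ≠ b

namespace AffRoot

variable {ι : Type*}

def pairing (n : ℤ) (β : AffRoot ι) (v : ι → ℤ) : ℤ := v β.a - v β.b + β.s * n

def IsPos [LT ι] (β : AffRoot ι) : Prop := (β.s = 0 ∧ β.a < β.b) ∨ 0 < β.s

theorem pairing_sub_smul (n : ℤ) (β : AffRoot ι) (v : ι → ℤ) (c : ℤ) (w : ι → ℤ) :
    β.pairing n (v - c • w) = β.pairing n v - c * (w β.a - w β.b) := by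
  simp only [pairing, Pi.sub_apply, Pi.smul_apply, smul_eq_mul]; ring

variable [DecidableEq ι]

def coroot (β : AffRoot ι) : ι → ℤ := Pi.single β.a 1 - Pi.single β.b 1

def refl (n : ℤ) (β : AffRoot ι) (v : ι → ℤ) : ι → ℤ := v - β.pairing n v • β.coroot

def reflectRoot (γ β : AffRoot ι) : AffRoot ι :=
  ⟨Equiv.swap γ.a γ.b β.a, Equiv.swap γ.a γ.b β.b,
    β.s - (γ.coroot β.a - γ.coroot β.b) * γ.s, (Equiv.swap γ.a γ.b).injective.ne β.ne⟩

variable (n : ℤ) (β γ : AffRoot ι) (v : ι → ℤ)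

theorem coroot_a_sub_coroot_b : β.coroot β.a - β.coroot β.b = 2 := by
  simp [coroot, β.ne, β.ne.symm]

@[simp]
theorem pairing_refl : β.pairing n (β.refl n v) = -β.pairing n v := by
  rw [refl, pairing_sub_smul, coroot_a_sub_coroot_b]; ring

@[simp]
theorem refl_refl : β.refl n (β.refl n v) = v := by
  conv_lhs => rw [refl, pairing_refl, refl]
  rw [neg_smul, sub_neg_eq_add, sub_add_cancel]

theorem refl_eq_self_iff : β.refl n v = v ↔ β.pairing n v = 0 := by
  rw [refl, sub_eq_self, smul_eq_zero, or_iff_left]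
  intro h
  simpa [coroot, β.ne.symm] using congrFun h β.a

theorem refl_eq_comp_swap_sub :
    β.refl n v = v ∘ Equiv.swap β.a β.b - (β.s * n) • β.coroot := by
  rw [refl, comp_swap_eq_sub_smul, coroot, pairing, add_smul]; abel

theorem pairing_reflectRoot : (γ.reflectRoot β).pairing n v = β.pairing n (γ.refl n v) := by
  have hv := congrFun (comp_swap_eq_sub_smul γ.a γ.b v)
  simp only [Function.comp_apply] at hv
  rw [refl, pairing_sub_smul]
  simp only [pairing, reflectRoot, hv, coroot, Pi.sub_apply, Pi.smul_apply, smul_eq_mul]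
  ring

theorem coroot_reflectRoot :
    (γ.reflectRoot β).coroot = β.coroot - (β.coroot γ.a - β.coroot γ.b) • γ.coroot :=
  calc (γ.reflectRoot β).coroot = β.coroot ∘ Equiv.swap γ.a γ.b := by
        simp only [coroot, reflectRoot, Pi.sub_comp, Pi.single_comp_equiv, Equiv.symm_swap]
    _ = _ := comp_swap_eq_sub_smul _ _ _

theorem refl_reflectRoot :
    (γ.reflectRoot β).refl n (γ.refl n v) = γ.refl n (β.refl n v) := by
  conv_lhs => rw [refl, pairing_reflectRoot, refl_refl, coroot_reflectRoot]
  simp only [refl, pairing_sub_smul]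
  funext j
  simp only [Pi.sub_apply, Pi.smul_apply, smul_eq_mul]
  ring

theorem refl_comp_refl : β.refl n (γ.refl n v) = γ.refl n ((γ.reflectRoot β).refl n v) := by
  rw [← refl_refl n γ (β.refl n (γ.refl n v)), ← refl_reflectRoot n β γ (γ.refl n v), refl_refl]

theorem dotProduct_refl_self [Fintype ι] :
    β.refl n v ⬝ᵥ β.refl n v = v ⬝ᵥ v + 2 * β.s * n * β.pairing n v := by
  have hvc : ∀ w, w ⬝ᵥ β.coroot = w β.a - w β.b := fun w => by simp [coroot, dotProduct_sub]
  rw [refl, sub_dotProduct, dotProduct_sub, dotProduct_sub, smul_dotProduct, dotProduct_smul,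
    smul_dotProduct, dotProduct_smul, dotProduct_comm β.coroot v, hvc, hvc, coroot_a_sub_coroot_b]
  simp only [smul_eq_mul, pairing]
  ring

end AffRoot

open AffRoot

def simpleRoot (r : ℕ) (i : Fin (r + 2)) : AffRoot (Fin (r + 2)) :=
  if h : i = 0 then ⟨Fin.last (r + 1), 0, 1, Fin.last_pos.ne'⟩
  else ⟨i - 1, i, 0, (Fin.sub_one_lt_iff.2 (Fin.pos_iff_ne_zero.2 h)).ne⟩

section Alcove

variable {r : ℕ}

theorem simpleRoot_isPos (i : Fin (r + 2)) : (simpleRoot r i).IsPos := by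
  unfold simpleRoot IsPos
  split_ifs with h
  · exact Or.inr one_pos
  · exact Or.inl ⟨rfl, Fin.sub_one_lt_iff.2 (Fin.pos_iff_ne_zero.2 h)⟩

/- A finite check on the positions of `a` and `b` relative to the two coordinates moved by
`s_i`: only `α_i` itself changes sign. -/
theorem eq_simpleRoot_of_not_isPos_reflectRoot {i : Fin (r + 2)} {β : AffRoot (Fin (r + 2))}
    (hβ : β.IsPos) (h : ¬((simpleRoot r i).reflectRoot β).IsPos) : β = simpleRoot r i := by
  obtain ⟨a, b, s, hab⟩ := β
  have := a.isLt; have := b.isLt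
  have hval_sub_one : i ≠ 0 → ((i - 1 : Fin (r + 2)) : ℕ) = i - 1 := fun h => by
    rw [Fin.coe_sub_one, if_neg h]
  unfold simpleRoot at *
  split_ifs at * with hi
  all_goals
    simp only [reflectRoot, coroot, IsPos, AffRoot.mk.injEq, Pi.sub_apply, Pi.single_apply,
      Equiv.swap_apply_def, Fin.lt_def, Fin.ext_iff, Fin.val_last, Fin.val_zero] at *
    have hL : ((Fin.last (r + 1) : Fin (r + 2)) : ℕ) = r + 1 := rfl
    have h0 : ((0 : Fin (r + 2)) : ℕ) = 0 := rfl
    split_ifs at * <;> omega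

theorem pairing_nonneg_of_inA {n : ℤ} (hn : 0 ≤ n) {lam : Fin (r + 2) → ℤ} (hA : inA r n lam)
    {β : AffRoot (Fin (r + 2))} (hβ : β.IsPos) : 0 ≤ β.pairing n lam := by
  obtain ⟨hanti, hgap⟩ := hA
  unfold pairing
  rcases hβ with ⟨hs, hab⟩ | hs
  · rw [hs, zero_mul, add_zero, sub_nonneg]
    exact hanti _ _ hab.le
  · have ha := hanti _ _ (Fin.le_last β.a)
    have hb := hanti _ _ (Fin.zero_le β.b)
    have : n ≤ β.s * n := le_mul_of_one_le_left hn hs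
    linarith

theorem gen_eq_refl (n : ℤ) (i : Fin (r + 2)) (v : Fin (r + 2) → ℤ) :
    gen r n i v = (simpleRoot r i).refl n v := by
  rw [refl_eq_comp_swap_sub]
  unfold gen simpleRoot
  split_ifs with hi
  · funext j
    have hL : (Fin.last (r + 1) : Fin (r + 2)) ≠ 0 := Fin.last_pos.ne'
    by_cases h0 : j = 0
    · simp [affPerm, Function.Involutive.toPerm, Equiv.coe_fn_mk, coroot, h0, hL.symm]
    · by_cases hj : j = Fin.last (r + 1)
      · simp [affPerm, Function.Involutive.toPerm, Equiv.coe_fn_mk, coroot, hj, hL]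
      · simp [affPerm, Function.Involutive.toPerm, Equiv.coe_fn_mk, coroot, h0, hj,
          Equiv.swap_apply_of_ne_of_ne hj h0]
  · funext j
    simp [swapPerm]

theorem gen_gen (n : ℤ) (i : Fin (r + 2)) (v : Fin (r + 2) → ℤ) :
    gen r n i (gen r n i v) = v := by
  rw [gen_eq_refl, gen_eq_refl, refl_refl]

abbrev wordProd (r : ℕ) (n : ℤ) (l : List (Fin (r + 2))) : Equiv.Perm (Fin (r + 2) → ℤ) :=
  (l.map (gen r n)).prod

section Words

variable {n : ℤ}

theorem wordProd_cons_apply (i : Fin (r + 2)) (l : List (Fin (r + 2))) (v : Fin (r + 2) → ℤ) :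
    wordProd r n (i :: l) v = gen r n i (wordProd r n l v) := by
  simp [wordProd, Equiv.Perm.mul_apply]

theorem wordProd_append_apply (l m : List (Fin (r + 2))) (v : Fin (r + 2) → ℤ) :
    wordProd r n (l ++ m) v = wordProd r n l (wordProd r n m v) := by
  simp [wordProd, Equiv.Perm.mul_apply]

theorem wordProd_reverse_apply (l : List (Fin (r + 2))) (v : Fin (r + 2) → ℤ) :
    wordProd r n l.reverse (wordProd r n l v) = v := by
  induction l with
  | nil => rfl
  | cons i l ih =>
    rw [List.reverse_cons, wordProd_append_apply]
    exact (congrArg (wordProd r n l.reverse) (gen_gen n i _)).trans ih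

theorem exists_sublist_wordProd_eq_refl (hn : 0 ≤ n) {lam : Fin (r + 2) → ℤ} (hA : inA r n lam) :
    ∀ (l : List (Fin (r + 2))) {β : AffRoot (Fin (r + 2))}, β.IsPos →
      β.pairing n (wordProd r n l lam) < 0 →
      ∃ l', l'.Sublist l ∧ l'.length + 1 = l.length ∧
        wordProd r n l' lam = β.refl n (wordProd r n l lam)
  | [], _, hβ, h => absurd h (not_lt.2 (pairing_nonneg_of_inA hn hA hβ))
  | i :: l, β, hβ, h => by
    rw [wordProd_cons_apply, gen_eq_refl] at h ⊢
    by_cases hγ : ((simpleRoot r i).reflectRoot β).IsPos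
    · obtain ⟨l', hl', hlen, heq⟩ :=
        exists_sublist_wordProd_eq_refl hn hA l hγ (by rwa [pairing_reflectRoot])
      refine ⟨i :: l', hl'.cons_cons i, by simp [hlen], ?_⟩
      rw [wordProd_cons_apply, heq, gen_eq_refl, refl_comp_refl n β (simpleRoot r i)]
    · obtain rfl := eq_simpleRoot_of_not_isPos_reflectRoot hβ hγ
      exact ⟨l, l.sublist_cons_self i, rfl, by rw [refl_refl]⟩

theorem exists_wordProd_eq_comp (σ : Equiv.Perm (Fin (r + 2))) :
    ∃ l : List (Fin (r + 2)), ∀ v, wordProd r n l v = v ∘ σ := by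
  have hσ : σ ∈ Submonoid.closure
      (Set.range fun i : Fin (r + 1) => Equiv.swap i.castSucc i.succ) := by
    rw [Equiv.Perm.mclosure_swap_castSucc_succ]; trivial
  induction hσ using Submonoid.closure_induction with
  | mem _ h =>
    obtain ⟨i, rfl⟩ := h
    have hi : i.succ - 1 = i.castSucc := by ext; simp [Fin.coe_sub_one]
    refine ⟨[i.succ], fun v => ?_⟩
    funext j
    simp [wordProd, gen, Fin.succ_ne_zero, swapPerm, hi]
  | one => exact ⟨[], fun v => rfl⟩
  | mul σ τ _ _ hσ hτ =>
    obtain ⟨l, hl⟩ := hσ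
    obtain ⟨m, hm⟩ := hτ
    exact ⟨m ++ l, fun v => by rw [wordProd_append_apply, hl, hm]; rfl⟩

/- Take a point `u` of the orbit of `v` of least squared norm and sort it. Sorting keeps the norm,
and if the sorted point violated the gap condition, `s₀` would lower the norm by
`2n |⟨α₀, ·⟩| > 0`. -/
theorem exists_inA_wordProd_eq (hn : 0 < n) (v : Fin (r + 2) → ℤ) :
    ∃ lam l, inA r n lam ∧ wordProd r n l lam = v := by
  let f : List (Fin (r + 2)) → ℕ := fun l => (wordProd r n l v ⬝ᵥ wordProd r n l v).toNat
  set u := wordProd r n (Function.argmin f) v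
  obtain ⟨σ, hσ⟩ : ∃ σ : Equiv.Perm (Fin (r + 2)), Antitone (u ∘ σ) :=
    ⟨Tuple.sort (-u), by simpa [Function.comp_def] using (Tuple.monotone_sort (-u)).neg⟩
  obtain ⟨ls, hls⟩ := exists_wordProd_eq_comp (n := n) σ
  have hl : wordProd r n (ls ++ Function.argmin f) v = u ∘ σ := by
    rw [wordProd_append_apply, hls]
  refine ⟨u ∘ σ, (ls ++ Function.argmin f).reverse, ⟨hσ, ?_⟩, by rw [← hl, wordProd_reverse_apply]⟩
  by_contra hgap
  have hpair : (simpleRoot r 0).pairing n (u ∘ σ) < 0 := by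
    simp only [simpleRoot, dif_pos, pairing]
    linarith
  have hnorm_comp : (u ∘ σ) ⬝ᵥ (u ∘ σ) = u ⬝ᵥ u := by
    simp [dotProduct, Equiv.sum_comp σ (fun j => u j * u j)]
  have hdecr := dotProduct_refl_self n (simpleRoot r 0) (u ∘ σ)
  have hnonneg : 0 ≤ (simpleRoot r 0).refl n (u ∘ σ) ⬝ᵥ (simpleRoot r 0).refl n (u ∘ σ) :=
    Finset.sum_nonneg fun j _ => mul_self_nonneg _
  have hs : (simpleRoot r 0).s = 1 := by simp [simpleRoot]
  rw [hs] at hdecr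
  have hlt : 0 < n * -(simpleRoot r 0).pairing n (u ∘ σ) := mul_pos hn (neg_pos.2 hpair)
  refine Function.not_lt_argmin f (0 :: (ls ++ Function.argmin f)) ?_
  show ((wordProd r n (0 :: (ls ++ Function.argmin f)) v) ⬝ᵥ _).toNat < (u ⬝ᵥ u).toNat
  rw [wordProd_cons_apply, hl, gen_eq_refl, Int.toNat_lt_toNat] <;> linarith

theorem exists_isMinWordTo {lam v : Fin (r + 2) → ℤ} (h : ∃ l, wordProd r n l lam = v) :
    ∃ l, isMinWordTo r n lam v l :=
  ⟨Function.argminOn List.length {l | wordProd r n l lam = v} h,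
    Function.argminOn_mem _ _ h, fun _ hl => Function.argminOn_le List.length _ hl⟩

theorem isMinWordTo.isReducedWordOf {lam v : Fin (r + 2) → ℤ} {l : List (Fin (r + 2))}
    (h : isMinWordTo r n lam v l) : isReducedWordOf r n l (wordProd r n l) :=
  ⟨rfl, fun l' hl' => h.2 l' (by rw [hl']; exact h.1)⟩

theorem exists_sublist_isMinWordTo (hn : 0 ≤ n) {lam : Fin (r + 2) → ℤ} (hA : inA r n lam)
    (l : List (Fin (r + 2))) : ∃ m, m.Sublist l ∧ isMinWordTo r n lam (wordProd r n l lam) m := by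
  induction l with
  | nil => exact ⟨[], .slnil, rfl, fun _ _ => Nat.zero_le _⟩
  | cons i l ih =>
    obtain ⟨m, hml, hm, hmin⟩ := ih
    have hsub := hml.trans (l.sublist_cons_self i)
    rw [wordProd_cons_apply]
    set x := wordProd r n l lam
    rcases lt_trichotomy ((simpleRoot r i).pairing n x) 0 with hneg | hzero | hpos
    · obtain ⟨m', hm'm, hlen, hm'⟩ :=
        exists_sublist_wordProd_eq_refl hn hA m (simpleRoot_isPos i) (by rwa [hm])
      refine ⟨m', hm'm.trans hsub, by rw [hm', hm, gen_eq_refl], fun u hu => ?_⟩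
      have := hmin (i :: u) (by rw [wordProd_cons_apply, hu, gen_gen])
      simp only [List.length_cons] at this
      omega
    · rw [gen_eq_refl, (refl_eq_self_iff ..).2 hzero]
      exact ⟨m, hsub, hm, hmin⟩
    · refine ⟨i :: m, hml.cons_cons i, by rw [wordProd_cons_apply, hm], fun u hu => ?_⟩
      obtain ⟨u₀, hu₀, hu₀min⟩ := exists_isMinWordTo ⟨u, hu⟩
      obtain ⟨u', -, hlen, hu'⟩ := exists_sublist_wordProd_eq_refl hn hA u₀ (simpleRoot_isPos i)
        (by rw [hu₀, gen_eq_refl, pairing_refl]; omega)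
      have := hmin u' (by rw [hu', hu₀, gen_eq_refl, refl_refl])
      have := hu₀min u hu
      simp only [List.length_cons]
      omega

end Words

theorem leN_refl_of_pairing_neg {n : ℤ} (hn : 0 < n) {β : AffRoot (Fin (r + 2))} (hβ : β.IsPos)
    {μ : Fin (r + 2) → ℤ} (h : β.pairing n μ < 0) : leN r n (β.refl n μ) μ := by
  obtain ⟨lam, l₀, hA, hl₀⟩ := exists_inA_wordProd_eq hn μ
  obtain ⟨lμ, hlμ, hlμmin⟩ := exists_isMinWordTo ⟨l₀, hl₀⟩
  obtain ⟨l', hl'μ, -, hl'⟩ :=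
    exists_sublist_wordProd_eq_refl hn.le hA lμ hβ (by rwa [hlμ])
  obtain ⟨lν, hlν, hν⟩ := exists_sublist_isMinWordTo hn.le hA l'
  rw [hl', hlμ] at hν
  exact ⟨lam, lν, lμ, hA, hν, ⟨hlμ, hlμmin⟩,
    lμ, isMinWordTo.isReducedWordOf ⟨hlμ, hlμmin⟩, lν, hlν.trans hl'μ, rfl⟩

theorem not_leN_refl_of_pairing_pos {n : ℤ} (hn : 0 ≤ n) {β : AffRoot (Fin (r + 2))}
    (hβ : β.IsPos) {μ : Fin (r + 2) → ℤ} (h : 0 < β.pairing n μ) :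
    ¬leN r n (β.refl n μ) μ := by
  rintro ⟨lam, lν, lμ, hA, hν, hμ, L, hL, L', hL'L, hL'⟩
  have hlenν : lν.length ≤ L'.length := hν.2 L' (by rw [hL']; exact hν.1)
  have hlenL : L.length ≤ lμ.length := hL.2 lμ rfl
  obtain ⟨l', -, hlen, hl'⟩ := exists_sublist_wordProd_eq_refl hn hA lν hβ
    (by rw [hν.1, pairing_refl]; omega)
  have := hμ.2 l' (by rw [hl', hν.1, refl_refl])
  have := hL'L.length_le
  omega

end Alcove

theorem reflAff_eq_refl {r : ℕ} (n : ℤ) {a b : Fin (r + 2)} (hab : a ≠ b) (s : ℤ)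
    (v : Fin (r + 2) → ℤ) : reflAff r n a b s v = (AffRoot.mk a b s hab).refl n v := by
  rw [refl_eq_comp_swap_sub]
  funext j
  by_cases hja : j = a
  · simp [reflAff, coroot, hja, hab]
  · by_cases hjb : j = b <;> simp [reflAff, coroot, hja, hjb, hab.symm]

/-- for μ ∈ ℤʳ and a positive affine root α̂ = n(ε_a − ε_b) + sn²δ
(i.e. (s = 0 and a < b) or s > 0), one has s_{α̂}μ <ₙ μ iff ⟨α̂, μ⟩ < 0. -/
theorem stmt10 (r n : ℕ) (hn : 0 < n) (μ : Fin (r + 2) → ℤ)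
    (a b : Fin (r + 2)) (hab : a ≠ b) (s : ℤ)
    (hpos : (s = 0 ∧ a < b) ∨ 0 < s) :
    (leN r n (reflAff r n a b s μ) μ ∧ reflAff r n a b s μ ≠ μ) ↔
      (n : ℤ) * (μ a - μ b) + s * (n : ℤ) ^ 2 < 0 := by
  set β : AffRoot (Fin (r + 2)) := ⟨a, b, s, hab⟩
  have hn' : (0 : ℤ) < n := by exact_mod_cast hn
  have hβ : β.IsPos := hpos
  have hscale : (n : ℤ) * (μ a - μ b) + s * (n : ℤ) ^ 2 = n * β.pairing n μ := by
    simp only [β, pairing]; ring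
  rw [reflAff_eq_refl _ hab, hscale, ← mul_zero (n : ℤ), mul_lt_mul_iff_right₀ hn', Ne,
    refl_eq_self_iff]
  constructor
  · rintro ⟨hle, hne⟩
    exact lt_of_le_of_ne (not_lt.1 fun h => not_leN_refl_of_pairing_pos hn'.le hβ h hle) hne
  · exact fun h => ⟨leN_refl_of_pairing_neg hn' hβ h, h.ne⟩
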